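/- Let Ψ : (0,∞) → ℂ be a measurable function with Ψ ∈ L^∞(0,∞). There exists a constant C > 0 such that |K_Ψ(n)| ≤ C/|n| for every n ∈ ℤ, n ≠ 0. -/

import Mathlib

open MeasureTheory Set
open scoped ENNReal NNReal Real

noncomputable section

/-- `φ_t(θ) = exp(-2t(1 - cos θ))`. -/
def phi (t θ : ℝ) : ℝ := Real.exp (-2 * t * (1 - Real.cos θ))

/-- `h_k(θ) = sin θ` if `k` is odd, `cos θ` if `k` is even. -/
def hfun (k : ℕ) (x : ℝ) : ℝ := if Odd k then Real.sin x else Real.cos x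

/-- `G(n,t) = (1/π) ∫_0^π exp(-2t(1-cos θ)) cos(nθ) dθ`. -/
def Gker (n : ℤ) (t : ℝ) : ℝ :=
  (1 / Real.pi) * ∫ θ in (0:ℝ)..Real.pi, phi t θ * Real.cos ((n : ℝ) * θ)

/-- `H_k(z,t) = z^{-k} ∫_0^π ∂_θ^k φ_t(θ) h_k(zθ) dθ`. -/
def Hker (k : ℕ) (z t : ℝ) : ℝ :=
  (1 / z ^ k) * ∫ θ in (0:ℝ)..Real.pi, iteratedDeriv k (phi t) θ * hfun k (z * θ)

/-- Kernel of the Laplace-transform-type multiplier: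
`K_Ψ(n) = -∫_0^∞ Ψ(t) ∂_t G(n,t) dt`. -/
def Kker (Ψ : ℝ → ℂ) (n : ℤ) : ℂ :=
  -∫ t in Set.Ioi (0:ℝ), Ψ t * ((deriv (fun s => Gker n s) t : ℝ) : ℂ)

/-- The ball `B_ℤ(n₀, r₀) = {n ∈ ℤ : |n - n₀| ≤ r₀}`. -/
def zball (n₀ : ℤ) (r₀ : ℝ) : Set ℤ := {n : ℤ | |(n : ℝ) - (n₀ : ℝ)| ≤ r₀}

/-- `b : ℤ → ℂ` is an `(H,p,2)`-atom: supported in a ball `B = B_ℤ(n₀,r₀)` with `r₀ ≥ 1`,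
`ℓ²`-norm at most `(#B)^{1/2-1/p}`, and vanishing moments up to order `1/p - 1`. -/
def IsHAtom (p : ℝ) (b : ℤ → ℂ) : Prop :=
  ∃ (n₀ : ℤ) (r₀ : ℝ), 1 ≤ r₀ ∧
    (∀ n : ℤ, b n ≠ 0 → n ∈ zball n₀ r₀) ∧
    Real.sqrt (∑' n : ℤ, ‖b n‖ ^ 2) ≤ ((zball n₀ r₀).ncard : ℝ) ^ ((1:ℝ)/2 - 1/p) ∧
    (∀ α : ℕ, (α : ℝ) ≤ 1/p - 1 → ∑' n : ℤ, (n : ℂ) ^ α * b n = 0)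

/-! Differentiating under the integral sign, `∂ₜG(n,t) = π⁻¹ ∫₀^π ∂ₜφ_t(θ) cos(nθ) dθ` with
`∂ₜφ_t = -2(1 - cos θ) φ_t`. Writing `y = t(1 - cos θ)`, the factors `yᵏ e^{-y}` are bounded by `k!`
and the remaining `e^{-y}` is dominated by a Gaussian, since `1 - cos θ ≥ 2θ²/π²`; its integral is
`O(t^{-1/2})`. This gives `|∂ₜG(n,t)| ≲ t^{-3/2}`, and, after integrating by parts twice in `θ`
(the boundary terms vanish because `sin(nπ) = 0` and `∂_θ∂ₜφ_t` vanishes at `0` and `π`),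
`|∂ₜG(n,t)| ≲ n⁻² t^{-1/2}`. Using the second bound for `t ≤ n²` and the first for `t > n²`,
both pieces of `∫₀^∞ |Ψ(t)| |∂ₜG(n,t)| dt` are `O(‖Ψ‖_∞ / |n|)`. -/

open intervalIntegral Real

lemma integral_exp_neg_mul_one_sub_cos_le {t : ℝ} (ht : 0 < t) :
    ∫ θ in (0:ℝ)..π, exp (-(t * (1 - cos θ))) ≤ 2 / √t := by
  have hb : 0 < 2 / π ^ 2 * t := by positivity
  have h_gauss : ∀ θ ∈ Icc (0:ℝ) π,
      exp (-(t * (1 - cos θ))) ≤ exp (-(2 / π ^ 2 * t) * θ ^ 2) := fun θ hθ => by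
    have := cos_le_one_sub_mul_cos_sq (abs_le.2 ⟨by linarith [pi_pos, hθ.1], hθ.2⟩)
    gcongr
    nlinarith
  have h_half_line : ∫ θ in Ioc (0:ℝ) π, exp (-(2 / π ^ 2 * t) * θ ^ 2)
      ≤ ∫ θ in Ioi (0:ℝ), exp (-(2 / π ^ 2 * t) * θ ^ 2) :=
    setIntegral_mono_set (integrable_exp_neg_mul_sq hb).integrableOn
      (.of_forall fun _ => (exp_pos _).le) Ioc_subset_Ioi_self.eventuallyLE
  have h_pi_cube : π / (2 / π ^ 2 * t) ≤ 4 ^ 2 / t := by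
    rw [show π / (2 / π ^ 2 * t) = π ^ 3 / 2 / t by field_simp]
    gcongr
    nlinarith [pi_lt_d2, pi_pos]
  calc ∫ θ in (0:ℝ)..π, exp (-(t * (1 - cos θ)))
      ≤ ∫ θ in (0:ℝ)..π, exp (-(2 / π ^ 2 * t) * θ ^ 2) :=
        integral_mono_on pi_pos.le (by apply Continuous.intervalIntegrable; fun_prop)
          (by apply Continuous.intervalIntegrable; fun_prop) h_gauss
    _ ≤ √(π / (2 / π ^ 2 * t)) / 2 := by
        rw [integral_of_le pi_pos.le, ← integral_gaussian_Ioi]; exact h_half_line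
    _ ≤ √(4 ^ 2 / t) / 2 := by gcongr
    _ = 2 / √t := by rw [sqrt_div' _ ht.le, sqrt_sq (by norm_num)]; ring

lemma pow_mul_exp_neg_le_factorial {y : ℝ} (hy : 0 ≤ y) (k : ℕ) :
    y ^ k * exp (-y) ≤ k.factorial := by
  have h := pow_div_factorial_le_exp _ hy k
  rw [div_le_iff₀ (by positivity)] at h
  calc y ^ k * exp (-y) ≤ exp y * k.factorial * exp (-y) := by gcongr
    _ = k.factorial := by
        rw [mul_comm (exp y), mul_assoc, ← exp_add, add_neg_cancel, exp_zero, mul_one]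

-- `∂ₜφ_t(θ)` and its first two derivatives in `θ`.
def phiT (t θ : ℝ) : ℝ := -2 * (1 - cos θ) * phi t θ

def phiT' (t θ : ℝ) : ℝ := sin θ * (4 * t * (1 - cos θ) - 2) * phi t θ

def phiT'' (t θ : ℝ) : ℝ :=
  (cos θ * (4 * t * (1 - cos θ) - 2) + sin θ ^ 2 * (8 * t - 8 * t ^ 2 * (1 - cos θ))) * phi t θ

lemma phi_pos (t θ : ℝ) : 0 < phi t θ := exp_pos _

lemma phi_eq_exp_mul_exp (t θ : ℝ) :
    phi t θ = exp (-(t * (1 - cos θ))) * exp (-(t * (1 - cos θ))) := by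
  rw [phi, ← exp_add]; ring_nf

lemma continuous_phi (t : ℝ) : Continuous (phi t) := by unfold phi; fun_prop

lemma continuous_phiT (t : ℝ) : Continuous (phiT t) := by unfold phiT phi; fun_prop

lemma continuous_phiT'' (t : ℝ) : Continuous (phiT'' t) := by unfold phiT'' phi; fun_prop

lemma hasDerivAt_phi_left (t θ : ℝ) : HasDerivAt (fun s => phi s θ) (phiT t θ) t := by
  have := (((hasDerivAt_id' t).const_mul (-2)).mul_const (1 - cos θ)).exp
  exact this.congr_deriv (by simp only [phiT, phi]; ring)

lemma hasDerivAt_phi (t θ : ℝ) : HasDerivAt (phi t) (-2 * t * sin θ * phi t θ) θ := by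
  have := (((hasDerivAt_cos θ).const_sub 1).const_mul (-2 * t)).exp
  exact this.congr_deriv (by simp only [phi]; ring)

lemma hasDerivAt_phiT (t θ : ℝ) : HasDerivAt (phiT t) (phiT' t θ) θ := by
  have := (((hasDerivAt_cos θ).const_sub 1).const_mul (-2)).mul (hasDerivAt_phi t θ)
  exact this.congr_deriv (by simp only [phiT']; ring)

lemma hasDerivAt_phiT' (t θ : ℝ) : HasDerivAt (phiT' t) (phiT'' t θ) θ := by
  have := ((hasDerivAt_sin θ).mul
    ((((hasDerivAt_cos θ).const_sub 1).const_mul (4 * t)).sub_const 2)).mul (hasDerivAt_phi t θ)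
  exact this.congr_deriv (by simp only [phiT'', Pi.mul_apply]; ring)

lemma abs_phiT_le_four {t : ℝ} (ht : 0 ≤ t) (θ : ℝ) : |phiT t θ| ≤ 4 := by
  have hu := neg_one_le_cos θ
  have hu' := cos_le_one θ
  have hphi : phi t θ ≤ 1 := exp_le_one_iff.2 (by nlinarith)
  rw [phiT, abs_mul, abs_of_nonpos (by linarith), abs_of_pos (phi_pos t θ)]
  nlinarith [phi_pos t θ]

lemma hasDerivAt_Gker (n : ℤ) {t : ℝ} (ht : 0 < t) :
    HasDerivAt (Gker n) ((1 / π) * ∫ θ in (0:ℝ)..π, phiT t θ * cos (n * θ)) t := by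
  have h := hasDerivAt_integral_of_dominated_loc_of_deriv_le (μ := volume) (a := 0) (b := π)
    (F := fun s θ => phi s θ * cos (n * θ)) (F' := fun s θ => phiT s θ * cos (n * θ))
    (bound := fun _ => 4) (Ioi_mem_nhds ht)
    (.of_forall fun s => ((continuous_phi s).mul (by fun_prop)).aestronglyMeasurable)
    (((continuous_phi t).mul (by fun_prop)).intervalIntegrable _ _)
    ((continuous_phiT t).mul (by fun_prop)).aestronglyMeasurable
    (.of_forall fun θ _ s hs => by
      rw [norm_mul, norm_eq_abs, norm_eq_abs]
      nlinarith [abs_phiT_le_four (le_of_lt hs) θ, abs_cos_le_one (n * θ), abs_nonneg (phiT s θ),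
        abs_nonneg (cos (n * θ))])
    intervalIntegrable_const
    (.of_forall fun θ _ s _ => (hasDerivAt_phi_left s θ).mul_const _)
  exact h.2.const_mul (1 / π)

lemma integral_mul_cos_eq_of_hasDerivAt {u u' u'' : ℝ → ℝ} (hu : ∀ θ, HasDerivAt u (u' θ) θ)
    (hu' : ∀ θ, HasDerivAt u' (u'' θ) θ) (hu'' : Continuous u'') (h0 : u' 0 = 0)
    (hπ : u' π = 0) {n : ℤ} (hn : n ≠ 0) :
    ∫ θ in (0:ℝ)..π, u θ * cos (n * θ) = -(1 / (n:ℝ) ^ 2) * ∫ θ in (0:ℝ)..π, u'' θ * cos (n * θ) := by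
  have hn' : (n:ℝ) ≠ 0 := Int.cast_ne_zero.2 hn
  have hsin : ∀ θ, HasDerivAt (fun x => sin (n * x) / n) (cos (n * θ)) θ := fun θ =>
    (((hasDerivAt_id' θ).const_mul (n:ℝ)).sin.div_const (n:ℝ)).congr_deriv (by field_simp)
  have hcos : ∀ θ, HasDerivAt (fun x => -cos (n * x) / n ^ 2) (sin (n * θ) / n) θ := fun θ =>
    (((hasDerivAt_id' θ).const_mul (n:ℝ)).cos.neg.div_const ((n:ℝ) ^ 2)).congr_deriv
      (by field_simp)
  have hu'_cont : Continuous u' := continuous_iff_continuousAt.2 fun θ => (hu' θ).continuousAt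
  rw [integral_mul_deriv_eq_deriv_mul (fun θ _ => hu θ) (fun θ _ => hsin θ)
      (hu'_cont.intervalIntegrable _ _) (by apply Continuous.intervalIntegrable; fun_prop),
    integral_mul_deriv_eq_deriv_mul (fun θ _ => hu' θ) (fun θ _ => hcos θ)
      (hu''.intervalIntegrable _ _) (by apply Continuous.intervalIntegrable; fun_prop),
    sin_int_mul_pi, mul_zero, sin_zero, h0, hπ, ← intervalIntegral.integral_const_mul]
  simp only [zero_div, mul_zero, zero_mul, sub_zero, zero_sub, neg_neg]
  congr 1
  ext θ
  ring

lemma abs_integral_mul_cos_le {u : ℝ → ℝ} {t C : ℝ} (ht : 0 < t)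
    (hu : ∀ θ, |u θ| ≤ C * exp (-(t * (1 - cos θ)))) (x : ℝ) :
    |∫ θ in (0:ℝ)..π, u θ * cos (x * θ)| ≤ C * (2 / √t) := by
  have hC : 0 ≤ C := nonneg_of_mul_nonneg_left ((abs_nonneg _).trans (hu 0)) (exp_pos _)
  calc |∫ θ in (0:ℝ)..π, u θ * cos (x * θ)|
      ≤ ∫ θ in (0:ℝ)..π, C * exp (-(t * (1 - cos θ))) := by
        rw [← norm_eq_abs]
        refine norm_integral_le_of_norm_le pi_pos.le (.of_forall fun θ _ => ?_)
          ((by fun_prop : Continuous fun θ => C * exp (-(t * (1 - cos θ)))).intervalIntegrable _ _)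
        rw [norm_mul, norm_eq_abs, norm_eq_abs]
        nlinarith [hu θ, abs_cos_le_one (x * θ), abs_nonneg (u θ), abs_nonneg (cos (x * θ))]
    _ ≤ C * (2 / √t) := by
        rw [intervalIntegral.integral_const_mul]
        exact mul_le_mul_of_nonneg_left (integral_exp_neg_mul_one_sub_cos_le ht) hC

lemma abs_phiT_le {t : ℝ} (ht : 0 < t) (θ : ℝ) :
    |phiT t θ| ≤ 2 / t * exp (-(t * (1 - cos θ))) := by
  have hu : 0 ≤ 1 - cos θ := by linarith [cos_le_one θ]
  rw [phiT, abs_of_nonpos (mul_nonpos_of_nonpos_of_nonneg (by linarith) (phi_pos t θ).le),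
    phi_eq_exp_mul_exp]
  set y := t * (1 - cos θ) with hy_def
  have hy : 0 ≤ y := mul_nonneg ht.le hu
  have hye : y * exp (-y) ≤ 1 := by simpa using pow_mul_exp_neg_le_factorial hy 1
  calc -(-2 * (1 - cos θ) * (exp (-y) * exp (-y))) = 2 / t * (y * exp (-y)) * exp (-y) := by
        rw [hy_def]; field_simp
    _ ≤ 2 / t * 1 * exp (-y) := by gcongr
    _ = 2 / t * exp (-y) := by ring

lemma abs_phiT''_le {t : ℝ} (ht : 0 ≤ t) (θ : ℝ) :
    |phiT'' t θ| ≤ 54 * exp (-(t * (1 - cos θ))) := by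
  have hc := abs_cos_le_one θ
  have hu : 0 ≤ 1 - cos θ := by linarith [cos_le_one θ]
  have hsin_sq : sin θ ^ 2 ≤ 2 * (1 - cos θ) := by nlinarith [sin_sq_add_cos_sq θ, cos_le_one θ]
  rw [phiT'', abs_mul, abs_of_pos (phi_pos t θ), phi_eq_exp_mul_exp]
  set y := t * (1 - cos θ) with hy_def
  have hy : 0 ≤ y := mul_nonneg ht hu
  have hpoly : |cos θ * (4 * t * (1 - cos θ) - 2) + sin θ ^ 2 * (8 * t - 8 * t ^ 2 * (1 - cos θ))|
      ≤ 2 + 20 * y + 16 * y ^ 2 := by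
    have h₁ : |cos θ * (4 * t * (1 - cos θ) - 2)| ≤ 4 * y + 2 := by
      rw [abs_mul]
      have : |4 * t * (1 - cos θ) - 2| ≤ 4 * y + 2 := abs_le.2 ⟨by linarith, by linarith⟩
      nlinarith [abs_nonneg (cos θ)]
    have h₂ : |sin θ ^ 2 * (8 * t - 8 * t ^ 2 * (1 - cos θ))| ≤ 16 * y + 16 * y ^ 2 := by
      rw [abs_mul, abs_of_nonneg (sq_nonneg _)]
      have : |8 * t - 8 * t ^ 2 * (1 - cos θ)| ≤ 8 * t * (1 + y) :=
        abs_le.2 ⟨by nlinarith, by nlinarith⟩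
      calc sin θ ^ 2 * |8 * t - 8 * t ^ 2 * (1 - cos θ)| ≤ 2 * (1 - cos θ) * (8 * t * (1 + y)) :=
            mul_le_mul hsin_sq this (abs_nonneg _) (by linarith)
        _ = 16 * y + 16 * y ^ 2 := by ring
    linarith [abs_add_le (cos θ * (4 * t * (1 - cos θ) - 2))
      (sin θ ^ 2 * (8 * t - 8 * t ^ 2 * (1 - cos θ)))]
  have h₀ : exp (-y) ≤ 1 := by simpa using pow_mul_exp_neg_le_factorial hy 0
  have h₁ : y * exp (-y) ≤ 1 := by simpa using pow_mul_exp_neg_le_factorial hy 1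
  have h₂ : y ^ 2 * exp (-y) ≤ 2 := by simpa using pow_mul_exp_neg_le_factorial hy 2
  calc _ ≤ (2 + 20 * y + 16 * y ^ 2) * exp (-y) * exp (-y) := by
        rw [← mul_assoc]; gcongr
    _ ≤ 54 * exp (-y) := by gcongr; nlinarith

lemma abs_deriv_Gker_le (n : ℤ) {t : ℝ} (ht : 0 < t) :
    |deriv (Gker n) t| ≤ 4 / (π * t * √t) := by
  have h := abs_integral_mul_cos_le ht (abs_phiT_le ht) n
  rw [(hasDerivAt_Gker n ht).deriv, abs_mul, abs_of_pos (by positivity)]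
  calc 1 / π * |∫ θ in (0:ℝ)..π, phiT t θ * cos (n * θ)| ≤ 1 / π * (2 / t * (2 / √t)) := by gcongr
    _ = 4 / (π * t * √t) := by field_simp; ring

lemma abs_deriv_Gker_le_of_ne_zero {n : ℤ} (hn : n ≠ 0) {t : ℝ} (ht : 0 < t) :
    |deriv (Gker n) t| ≤ 108 / (π * n ^ 2 * √t) := by
  have h := abs_integral_mul_cos_le ht (abs_phiT''_le ht.le) n
  have hn' : (n:ℝ) ≠ 0 := Int.cast_ne_zero.2 hn
  rw [(hasDerivAt_Gker n ht).deriv, integral_mul_cos_eq_of_hasDerivAt (hasDerivAt_phiT t)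
      (hasDerivAt_phiT' t) (continuous_phiT'' t) (by simp [phiT']) (by simp [phiT']) hn,
    abs_mul, abs_mul, abs_neg, abs_of_pos (by positivity), abs_of_pos (by positivity)]
  calc 1 / π * (1 / (n:ℝ) ^ 2 * |∫ θ in (0:ℝ)..π, phiT'' t θ * cos (n * θ)|)
      ≤ 1 / π * (1 / (n:ℝ) ^ 2 * (54 * (2 / √t))) := by gcongr
    _ = 108 / (π * n ^ 2 * √t) := by field_simp; ring

lemma norm_setIntegral_Ioi_le_of_le_div_sqrt {E : Type*} [NormedAddCommGroup E] [NormedSpace ℝ E]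
    {f : ℝ → E} {A B R : ℝ} (hA : 0 ≤ A) (hB : 0 ≤ B) (hR : 0 < R)
    (h₁ : ∀ᵐ t, t ∈ Ioc 0 R → ‖f t‖ ≤ A / √t) (h₂ : ∀ᵐ t, t ∈ Ioi R → ‖f t‖ ≤ B / (t * √t)) :
    ‖∫ t in Ioi 0, f t‖ ≤ 2 * A * √R + 2 * B / √R := by
  by_cases hf : IntegrableOn f (Ioi 0)
  swap
  · rw [integral_undef hf, norm_zero]; positivity
  rw [← Ioc_union_Ioi_eq_Ioi hR.le, setIntegral_union (Ioc_disjoint_Ioi le_rfl) measurableSet_Ioi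
    (hf.mono_set Ioc_subset_Ioi_self) (hf.mono_set (Ioi_subset_Ioi hR.le))]
  refine (norm_add_le _ _).trans (add_le_add ?_ ?_)
  · have hg : ∀ t, 0 < t → A / √t = A * t ^ (-(1 / 2) : ℝ) := fun t ht => by
      rw [rpow_neg ht.le, sqrt_eq_rpow, div_eq_mul_inv]
    calc ‖∫ t in Ioc 0 R, f t‖ = ‖∫ t in (0:ℝ)..R, f t‖ := by rw [integral_of_le hR.le]
      _ ≤ ∫ t in (0:ℝ)..R, A * t ^ (-(1 / 2) : ℝ) :=
          norm_integral_le_of_norm_le hR.le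
            (h₁.mono fun t h ht => (h ht).trans_eq (hg t ht.1))
            ((intervalIntegral.intervalIntegrable_rpow' (by norm_num)).const_mul A)
      _ = 2 * A * √R := by
          rw [intervalIntegral.integral_const_mul, integral_rpow (Or.inl (by norm_num)),
            sqrt_eq_rpow]
          norm_num
          ring
  · have hg : ∀ t, 0 < t → B / (t * √t) = B * t ^ (-(3 / 2) : ℝ) := fun t ht => by
      rw [rpow_neg ht.le, show (3 / 2 : ℝ) = 1 + 1 / 2 by norm_num, rpow_add ht, rpow_one,
        sqrt_eq_rpow, div_eq_mul_inv]
    calc ‖∫ t in Ioi R, f t‖ ≤ ∫ t in Ioi R, B * t ^ (-(3 / 2) : ℝ) :=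
          MeasureTheory.norm_integral_le_of_norm_le
            ((integrableOn_Ioi_rpow_of_lt (by norm_num) hR).const_mul B)
            ((ae_restrict_iff' measurableSet_Ioi).2
              (h₂.mono fun t h ht => (h ht).trans_eq (hg t (hR.trans ht))))
      _ = 2 * B / √R := by
          rw [MeasureTheory.integral_const_mul, integral_Ioi_rpow_of_lt (by norm_num) hR,
            sqrt_eq_rpow, show -(3 / 2 : ℝ) + 1 = -(1 / 2) by norm_num, rpow_neg hR.le]
          field_simp

lemma MeasureTheory.MemLp.exists_ae_norm_le_of_top {α E : Type*} [MeasurableSpace α]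
    {μ : Measure α} [NormedAddCommGroup E] {f : α → E} (hf : MemLp f ⊤ μ) :
    ∃ M : ℝ≥0, ∀ᵐ x ∂μ, ‖f x‖ ≤ M :=
  eLpNormEssSup_lt_top_iff_isBoundedUnder.1 (eLpNorm_exponent_top (f := f) ▸ hf.eLpNorm_lt_top)

/-- Estimate (eq5.2): size bound for the kernel of the Laplace transform type multiplier. -/
theorem Kker_size_bound (Ψ : ℝ → ℂ)
    (hΨ : MemLp Ψ ⊤ (volume.restrict (Set.Ioi (0:ℝ)))) :
    ∃ C : ℝ, 0 < C ∧ ∀ n : ℤ, n ≠ 0 → ‖Kker Ψ n‖ ≤ C / |(n : ℝ)| := by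
  obtain ⟨M, hM⟩ := hΨ.exists_ae_norm_le_of_top
  rw [ae_restrict_iff' measurableSet_Ioi] at hM
  refine ⟨224 * M / π + 1, by positivity, fun n hn => ?_⟩
  have hbound := norm_setIntegral_Ioi_le_of_le_div_sqrt
    (f := fun t => Ψ t * ((deriv (fun s => Gker n s) t : ℝ) : ℂ))
    (A := 108 * M / (π * n ^ 2)) (B := 4 * M / π) (by positivity) (by positivity)
    (by positivity : (0:ℝ) < n ^ 2) ?small ?large
  · rw [Kker, norm_neg]
    calc _ ≤ _ := hbound
      _ = 224 * M / π / |(n:ℝ)| := by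
          rw [sqrt_sq_eq_abs, ← sq_abs]
          field_simp
          ring
      _ ≤ _ := by gcongr; linarith
  case small =>
    filter_upwards [hM] with t hMt ht
    rw [norm_mul, Complex.norm_real, norm_eq_abs]
    calc _ ≤ M * (108 / (π * n ^ 2 * √t)) :=
          mul_le_mul (hMt (Ioc_subset_Ioi_self ht)) (abs_deriv_Gker_le_of_ne_zero hn ht.1)
            (abs_nonneg _) M.2
      _ = _ := by field_simp
  case large =>
    filter_upwards [hM] with t hMt ht
    have ht0 : 0 < t := (sq_pos_of_ne_zero (Int.cast_ne_zero.2 hn)).trans ht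
    rw [norm_mul, Complex.norm_real, norm_eq_abs]
    calc _ ≤ M * (4 / (π * t * √t)) :=
          mul_le_mul (hMt ht0) (abs_deriv_Gker_le n ht0) (abs_nonneg _) M.2
      _ = _ := by field_simp
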